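/- arXiv:2007.08564 — 7 statements merged into one kernel-verified Lean document; each statement's English description precedes it below -/
import Mathlib

section
/- Let (T_n)_{n≥0} be nonnegative reals and (D_n)_{n≥1} be positive reals; set t'_0 = 0 and t'_n = t'_{n-1} + D_n, and define the age sample path Δ(t) = T_{n-1} + (t − t'_{n-1}) for t ∈ (t'_{n-1}, t'_n], n ≥ 1. If (1/n)∑_{j=1}^n (T_{j-1} D_j + D_j²/2) converges to a limit Q̄ and (1/n)∑_{j=1}^n D_j converges to a limit D̄ > 0 as n → ∞, then (1/t'_n) ∫_0^{t'_n} Δ(t) dt converges to Q̄ / D̄ as n → ∞. -/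
/-!
On the `j`-th inter-departure interval the age rises with slope one from `T j`, so its
integral is the trapezoid area `T j * D (j + 1) + D (j + 1) ^ 2 / 2`. Hence the integral up to `t' n`
is the sum of the first `n` areas, `t' n` is the sum of the first `n` inter-departure times, and the
time average is the quotient of two Cesàro means; the common factor `1 / n` cancels.
-/

open Filter MeasureTheory Topology

section Tooth

variable {f : ℝ → ℝ} {a b c : ℝ}

theorem intervalIntegrable_of_eqOn_tooth (hf : Set.EqOn f (fun t => c + (t - a)) (Set.Ioc a b))
    (hab : a ≤ b) : IntervalIntegrable f volume a b :=
  (intervalIntegrable_congr (Set.uIoc_of_le hab ▸ hf)).2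
    (Continuous.intervalIntegrable (by fun_prop) _ _)

theorem integral_of_eqOn_tooth (hf : Set.EqOn f (fun t => c + (t - a)) (Set.Ioc a b))
    (hab : a ≤ b) : ∫ t in a..b, f t = c * (b - a) + (b - a) ^ 2 / 2 := by
  have hline : ∫ t in a..b, f t = ∫ t in a..b, ((c - a) + t) := by
    refine intervalIntegral.integral_congr_ae (ae_of_all _ fun t ht => ?_)
    rw [Set.uIoc_of_le hab] at ht
    rw [hf ht]
    ring
  rw [hline, intervalIntegral.integral_add intervalIntegrable_const
    intervalIntegral.intervalIntegrable_id, intervalIntegral.integral_const, integral_id,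
    smul_eq_mul]
  ring

end Tooth

theorem tendsto_sum_div_sum_of_cesaro {a b : ℕ → ℝ} {A B : ℝ}
    (ha : Tendsto (fun n : ℕ => (1 / (n : ℝ)) * ∑ j ∈ Finset.range n, a j) atTop (𝓝 A))
    (hb : Tendsto (fun n : ℕ => (1 / (n : ℝ)) * ∑ j ∈ Finset.range n, b j) atTop (𝓝 B))
    (hB : B ≠ 0) :
    Tendsto (fun n : ℕ => (∑ j ∈ Finset.range n, a j) / ∑ j ∈ Finset.range n, b j)
      atTop (𝓝 (A / B)) := by
  refine (ha.div hb hB).congr' ?_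
  filter_upwards [eventually_ne_atTop 0] with n hn
  exact mul_div_mul_left _ _ (by positivity)

theorem time_average_age_of_sawtooth_general
    (T D : ℕ → ℝ) (t' : ℕ → ℝ) (Δ : ℝ → ℝ) (Qbar Dbar : ℝ)
    (hD : ∀ n : ℕ, 1 ≤ n → 0 < D n)
    (ht0 : t' 0 = 0)
    (ht : ∀ n : ℕ, t' (n + 1) = t' n + D (n + 1))
    (hΔ : ∀ n : ℕ, ∀ t ∈ Set.Ioc (t' n) (t' (n + 1)), Δ t = T n + (t - t' n))
    (hQ : Tendsto (fun n : ℕ =>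
        (1 / (n : ℝ)) * ∑ j ∈ Finset.range n, (T j * D (j + 1) + (D (j + 1)) ^ 2 / 2))
      atTop (nhds Qbar))
    (hDbar : Tendsto (fun n : ℕ => (1 / (n : ℝ)) * ∑ j ∈ Finset.range n, D (j + 1))
      atTop (nhds Dbar))
    (hDpos : 0 < Dbar) :
    Tendsto (fun n : ℕ => (1 / t' n) * ∫ t in (0:ℝ)..(t' n), Δ t)
      atTop (nhds (Qbar / Dbar)) := by
  have hle : ∀ j, t' j ≤ t' (j + 1) := fun j => by
    linarith [ht j, hD (j + 1) j.succ_pos]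
  have ht'_sum : ∀ n, t' n = ∑ j ∈ Finset.range n, D (j + 1) := fun n =>
    (Finset.sum_range_induction _ _ ht0 n fun k _ => ht k).symm
  have hintegral : ∀ n, ∫ t in (0:ℝ)..(t' n), Δ t
      = ∑ j ∈ Finset.range n, (T j * D (j + 1) + (D (j + 1)) ^ 2 / 2) := fun n => by
    rw [← ht0, ← intervalIntegral.sum_integral_adjacent_intervals
      fun j _ => intervalIntegrable_of_eqOn_tooth (hΔ j) (hle j)]
    refine Finset.sum_congr rfl fun j _ => ?_
    rw [integral_of_eqOn_tooth (hΔ j) (hle j), ht, add_sub_cancel_left]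
  exact (tendsto_sum_div_sum_of_cesaro hQ hDbar hDpos.ne').congr fun n => by
    rw [one_div_mul_eq_div, hintegral, ht'_sum]

/-- Sample-path version of the time-average age formula
`Δ = (E[D_n T_{n-1}] + E[D_n²]/2) / E[D_n]`: if the sawtooth age process
`Δ(t) = T_{n-1} + (t - t'_{n-1})` on `(t'_{n-1}, t'_n]` (with delivery times
`t'_n = t'_{n-1} + D_n`, `t'_0 = 0`) has Cesàro-convergent trapezoid areas and
inter-departure times, then the time average `(1/t'_n) ∫_0^{t'_n} Δ(t) dt`
converges to `Q̄ / D̄`. -/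
theorem time_average_age_of_sawtooth
    (T D : ℕ → ℝ) (t' : ℕ → ℝ) (Δ : ℝ → ℝ) (Qbar Dbar : ℝ)
    (hT : ∀ n, 0 ≤ T n)
    (hD : ∀ n : ℕ, 1 ≤ n → 0 < D n)
    (ht0 : t' 0 = 0)
    (ht : ∀ n : ℕ, t' (n + 1) = t' n + D (n + 1))
    (hΔ : ∀ n : ℕ, ∀ t ∈ Set.Ioc (t' n) (t' (n + 1)), Δ t = T n + (t - t' n))
    (hQ : Tendsto (fun n : ℕ =>
        (1 / (n : ℝ)) * ∑ j ∈ Finset.range n, (T j * D (j + 1) + (D (j + 1)) ^ 2 / 2))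
      atTop (nhds Qbar))
    (hDbar : Tendsto (fun n : ℕ => (1 / (n : ℝ)) * ∑ j ∈ Finset.range n, D (j + 1))
      atTop (nhds Dbar))
    (hDpos : 0 < Dbar) :
    Tendsto (fun n : ℕ => (1 / t' n) * ∫ t in (0:ℝ)..(t' n), Δ t)
      atTop (nhds (Qbar / Dbar)) :=
  time_average_age_of_sawtooth_general T D t' Δ Qbar Dbar hD ht0 ht hΔ hQ hDbar hDpos
end

section
/- For every ρ ∈ (0,1), the FCFS M/D/1 average age is strictly smaller than the FCFS M/M/1 average age at the same load: (1/(2(1−ρ)) + 1/2 + (1−ρ)·exp(ρ)/ρ) < (1 + 1/ρ + ρ²/(1−ρ)). -/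
/-!
Clearing the denominator `ρ (1 - ρ)`, the age gap `Δ_{M/M/1} - Δ_{M/D/1}` has the sign of
`1 - ρ - ρ²/2 + ρ³ - (1 - ρ)² e^ρ`. The cubic Taylor bound `e^ρ ≤ 1 + ρ + ρ²/2 + 2ρ³/9` on
`[0, 1]` bounds this quantity below by `ρ³ (1 - ρ/2 - 2(1 - ρ)²/9) > 0`.
-/

open Real

noncomputable def mm1Age (ρ : ℝ) : ℝ := 1 + 1 / ρ + ρ ^ 2 / (1 - ρ)

noncomputable def md1Age (ρ : ℝ) : ℝ := 1 / (2 * (1 - ρ)) + 1 / 2 + (1 - ρ) * exp ρ / ρ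

theorem exp_le_cubic_of_nonneg_of_le_one {x : ℝ} (h0 : 0 ≤ x) (h1 : x ≤ 1) :
    exp x ≤ 1 + x + x ^ 2 / 2 + 2 / 9 * x ^ 3 := by
  have h := Real.exp_bound' h0 h1 (n := 3) (by norm_num)
  norm_num [Finset.sum_range_succ, Nat.factorial] at h
  linarith

theorem one_sub_sq_mul_exp_lt {ρ : ℝ} (h0 : 0 < ρ) (h1 : ρ < 1) :
    (1 - ρ) ^ 2 * exp ρ < 1 - ρ - ρ ^ 2 / 2 + ρ ^ 3 := by
  have hgap : 0 < ρ ^ 3 * (1 - ρ / 2 - 2 / 9 * (1 - ρ) ^ 2) :=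
    mul_pos (by positivity) (by nlinarith)
  calc (1 - ρ) ^ 2 * exp ρ ≤ (1 - ρ) ^ 2 * (1 + ρ + ρ ^ 2 / 2 + 2 / 9 * ρ ^ 3) := by
        gcongr; exact exp_le_cubic_of_nonneg_of_le_one h0.le h1.le
    _ < 1 - ρ - ρ ^ 2 / 2 + ρ ^ 3 := by linear_combination hgap

theorem mm1Age_sub_md1Age {ρ : ℝ} (h0 : ρ ≠ 0) (h1 : ρ ≠ 1) :
    mm1Age ρ - md1Age ρ = (1 - ρ - ρ ^ 2 / 2 + ρ ^ 3 - (1 - ρ) ^ 2 * exp ρ) / (ρ * (1 - ρ)) := by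
  have h1' : 1 - ρ ≠ 0 := sub_ne_zero.mpr h1.symm
  unfold mm1Age md1Age
  field_simp
  ring

theorem md1Age_lt_mm1Age {ρ : ℝ} (h0 : 0 < ρ) (h1 : ρ < 1) : md1Age ρ < mm1Age ρ := by
  have hgap : 0 < mm1Age ρ - md1Age ρ := by
    rw [mm1Age_sub_md1Age h0.ne' h1.ne]
    exact div_pos (sub_pos.mpr (one_sub_sq_mul_exp_lt h0 h1)) (mul_pos h0 (sub_pos.mpr h1))
  linarith

/-- For every offered load `ρ ∈ (0,1)` (with unit service rate), the FCFS M/D/1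
average age is strictly smaller than the FCFS M/M/1 average age. -/
theorem md1_age_lt_mm1_age :
    ∀ ρ ∈ Set.Ioo (0 : ℝ) 1,
      1 / (2 * (1 - ρ)) + 1 / 2 + (1 - ρ) * Real.exp ρ / ρ
        < 1 + 1 / ρ + ρ ^ 2 / (1 - ρ) :=
  fun _ hρ => md1Age_lt_mm1Age hρ.1 hρ.2
end

section
/- For every ρ > 0 and μ > 0, the packet-management M/M/1 queue ages satisfy Δ_{M/M/1*}(ρ) ≤ Δ_{M/M/1/1}(ρ), Δ_{M/M/1*}(ρ) ≤ Δ_{M/M/1/2*}(ρ), and Δ_{M/M/1/2*}(ρ) ≤ Δ_{M/M/1/2}(ρ). -/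
/-!
Every age has the form `(1/μ)(1 + 1/ρ + penalty)` with the M/M/1* age as the penalty-free
baseline, so the first two comparisons only need nonnegative penalties for `ρ ≥ 0`.
For the last one, `1 + 3ρ + ρ² = 2(1 + ρ)² - (1 + ρ + ρ²)` gives the exact gap
`Δ_{M/M/1/2} - Δ_{M/M/1/2*} = (1/μ) (ρ/(1 + ρ))²`.
-/

noncomputable section

namespace MM1Age

def ageMM1Star (μ ρ : ℝ) : ℝ := (1 / μ) * (1 + 1 / ρ)

def ageMM11 (μ ρ : ℝ) : ℝ := (1 / μ) * (1 + 1 / ρ + ρ / (1 + ρ))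

def ageMM12Star (μ ρ : ℝ) : ℝ :=
  (1 / μ) * (1 + 1 / ρ + ρ ^ 2 * (1 + 3 * ρ + ρ ^ 2) / ((1 + ρ + ρ ^ 2) * (1 + ρ) ^ 2))

def ageMM12 (μ ρ : ℝ) : ℝ := (1 / μ) * (1 + 1 / ρ + 2 * ρ ^ 2 / (1 + ρ + ρ ^ 2))

variable {μ ρ : ℝ}

theorem ageMM1Star_le_ageMM11 (hμ : 0 ≤ μ) (hρ : 0 ≤ ρ) : ageMM1Star μ ρ ≤ ageMM11 μ ρ := by
  unfold ageMM1Star ageMM11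
  exact mul_le_mul_of_nonneg_left (le_add_of_nonneg_right (by positivity)) (by positivity)

theorem ageMM1Star_le_ageMM12Star (hμ : 0 ≤ μ) (hρ : 0 ≤ ρ) :
    ageMM1Star μ ρ ≤ ageMM12Star μ ρ := by
  unfold ageMM1Star ageMM12Star
  exact mul_le_mul_of_nonneg_left (le_add_of_nonneg_right (by positivity)) (by positivity)

theorem ageMM12_sub_ageMM12Star (hρ : 1 + ρ ≠ 0) :
    ageMM12 μ ρ - ageMM12Star μ ρ = (1 / μ) * (ρ / (1 + ρ)) ^ 2 := by
  have hq : 1 + ρ + ρ ^ 2 ≠ 0 := by nlinarith [sq_nonneg (ρ + 1 / 2)]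
  unfold ageMM12 ageMM12Star
  field_simp
  ring

theorem ageMM12Star_le_ageMM12 (hμ : 0 ≤ μ) : ageMM12Star μ ρ ≤ ageMM12 μ ρ := by
  rcases eq_or_ne (1 + ρ) 0 with hρ | hρ
  · -- at `ρ = -1` the M/M/1/2* penalty is `0` through the convention `x / 0 = 0`
    obtain rfl : ρ = -1 := by linarith
    unfold ageMM12Star ageMM12
    norm_num [hμ]
  · have hgap := ageMM12_sub_ageMM12Star (μ := μ) hρ
    have hgap_nonneg : 0 ≤ (1 / μ) * (ρ / (1 + ρ)) ^ 2 := by positivity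
    linarith

end MM1Age

end

/-- Comparisons of packet-management M/M/1 ages: for all `ρ > 0` and `μ > 0`,
`Δ_{M/M/1*} ≤ Δ_{M/M/1/1}`, `Δ_{M/M/1*} ≤ Δ_{M/M/1/2*}` and
`Δ_{M/M/1/2*} ≤ Δ_{M/M/1/2}`. -/
theorem mm1_packet_management_age_comparisons (ρ μ : ℝ) (hρ : 0 < ρ) (hμ : 0 < μ) :
    (1 / μ) * (1 + 1 / ρ) ≤ (1 / μ) * (1 + 1 / ρ + ρ / (1 + ρ)) ∧
    (1 / μ) * (1 + 1 / ρ) ≤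
      (1 / μ) * (1 + 1 / ρ +
        ρ ^ 2 * (1 + 3 * ρ + ρ ^ 2) / ((1 + ρ + ρ ^ 2) * (1 + ρ) ^ 2)) ∧
    (1 / μ) * (1 + 1 / ρ +
        ρ ^ 2 * (1 + 3 * ρ + ρ ^ 2) / ((1 + ρ + ρ ^ 2) * (1 + ρ) ^ 2)) ≤
      (1 / μ) * (1 + 1 / ρ + 2 * ρ ^ 2 / (1 + ρ + ρ ^ 2)) :=
  ⟨MM1Age.ageMM1Star_le_ageMM11 hμ.le hρ.le, MM1Age.ageMM1Star_le_ageMM12Star hμ.le hρ.le,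
    MM1Age.ageMM12Star_le_ageMM12 hμ.le⟩
end

section
/- Let φ = (1+√5)/2 be the golden ratio. For every μ > 0 and every offered load ρ with 0 < ρ ≤ 1/φ, the M/M/1 packet-management ages satisfy Δ_{M/M/1/2}(ρ) ≤ Δ_{M/M/1/1}(ρ). -/
/-! Both ages share the term `1 + 1/ρ`, so the comparison reduces to
`2ρ²/(1+ρ+ρ²) ≤ ρ/(1+ρ)`; clearing denominators this is `ρ (ρ² + ρ - 1) ≤ 0`,
and `ρ² + ρ ≤ 1` is exactly `ρ ≤ 1/φ`, because `1/φ` is the positive root of `x² + x - 1`. -/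

open scoped goldenRatio

namespace Real

theorem sq_add_self_le_one_of_le_inv_goldenRatio {ρ : ℝ} (hρ : 0 ≤ ρ) (hρφ : ρ ≤ φ⁻¹) :
    ρ ^ 2 + ρ ≤ 1 := by
  have hφ : φ⁻¹ + 1 = φ := by
    rw [inv_goldenRatio, ← one_sub_goldenRatio]
    ring
  calc ρ ^ 2 + ρ = ρ * (ρ + 1) := by ring
    _ ≤ φ⁻¹ * (φ⁻¹ + 1) := by gcongr
    _ = 1 := by rw [hφ, inv_mul_cancel₀ goldenRatio_ne_zero]

end Real

theorem two_mul_sq_div_le_div_of_sq_add_le_one {ρ : ℝ} (hρ : 0 ≤ ρ) (h : ρ ^ 2 + ρ ≤ 1) :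
    2 * ρ ^ 2 / (1 + ρ + ρ ^ 2) ≤ ρ / (1 + ρ) := by
  rw [div_le_div_iff₀ (by positivity) (by positivity)]
  nlinarith [mul_nonpos_of_nonneg_of_nonpos hρ (sub_nonpos.mpr h)]

/-- For offered load `0 < ρ ≤ 1/φ` (with `φ` the golden ratio), the M/M/1/2 age
is at most the M/M/1/1 age. -/
theorem mm12_age_le_mm11_age_low_load (ρ μ : ℝ) (hμ : 0 < μ) (hρ : 0 < ρ)
    (hρφ : ρ ≤ 1 / ((1 + Real.sqrt 5) / 2)) :
    (1 / μ) * (1 + 1 / ρ + 2 * ρ ^ 2 / (1 + ρ + ρ ^ 2)) ≤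
      (1 / μ) * (1 + 1 / ρ + ρ / (1 + ρ)) := by
  rw [one_div ((1 + Real.sqrt 5) / 2)] at hρφ
  have hload : ρ ^ 2 + ρ ≤ 1 := Real.sq_add_self_le_one_of_le_inv_goldenRatio hρ.le hρφ
  gcongr 1 / μ * (1 + 1 / ρ + ?_)
  exact two_mul_sq_div_le_div_of_sq_add_le_one hρ.le hload
end

section
/- Let φ = (1+√5)/2 be the golden ratio. For every μ > 0 and every offered load ρ with 1/φ ≤ ρ ≤ φ, the M/M/1 packet-management ages satisfy Δ_{M/M/1/2*}(ρ) ≤ Δ_{M/M/1/1}(ρ) ≤ Δ_{M/M/1/2}(ρ). -/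
/-!
Each age is `(1/μ)(1 + 1/ρ + ·)` with a different correction term, so the comparisons reduce to
comparing these terms. Clearing denominators, the M/M/1/2* term is at most the M/M/1/1 term
exactly when `ρ (1 + ρ) (1 + ρ - ρ²) ≥ 0`, and the M/M/1/1 term is at most the M/M/1/2 term
exactly when `ρ (ρ² + ρ - 1) ≥ 0`. Since `x² - x - 1 = (x - φ)(x - ψ)` and
`x² + x - 1 = (x + φ)(x - φ⁻¹)`, both hold for `φ⁻¹ ≤ ρ ≤ φ`.
-/

open Real goldenRatio

noncomputable section

def ageMM11 (μ ρ : ℝ) : ℝ := (1 / μ) * (1 + 1 / ρ + ρ / (1 + ρ))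

def ageMM12Star (μ ρ : ℝ) : ℝ :=
  (1 / μ) * (1 + 1 / ρ + ρ ^ 2 * (1 + 3 * ρ + ρ ^ 2) / ((1 + ρ + ρ ^ 2) * (1 + ρ) ^ 2))

def ageMM12 (μ ρ : ℝ) : ℝ := (1 / μ) * (1 + 1 / ρ + 2 * ρ ^ 2 / (1 + ρ + ρ ^ 2))

end

variable {μ ρ : ℝ}

lemma sq_le_self_add_one_of_le_goldenRatio (hψ : ψ ≤ ρ) (hφ : ρ ≤ φ) : ρ ^ 2 ≤ ρ + 1 := by
  have hfactor : ρ ^ 2 - ρ - 1 = (ρ - φ) * (ρ - ψ) := by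
    linear_combination ρ * goldenRatio_add_goldenConj - goldenRatio_mul_goldenConj
  linarith [mul_nonpos_of_nonpos_of_nonneg (sub_nonpos.2 hφ) (sub_nonneg.2 hψ)]

lemma one_le_sq_add_self_of_inv_goldenRatio_le (h : φ⁻¹ ≤ ρ) : 1 ≤ ρ ^ 2 + ρ := by
  have hfactor : ρ ^ 2 + ρ - 1 = (ρ + φ) * (ρ - φ⁻¹) := by
    rw [inv_goldenRatio]
    linear_combination -ρ * goldenRatio_add_goldenConj - goldenRatio_mul_goldenConj
  have hρ : 0 < ρ := (inv_pos.2 goldenRatio_pos).trans_le h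
  linarith [mul_nonneg (add_pos hρ goldenRatio_pos).le (sub_nonneg.2 h)]

lemma ageMM12Star_le_ageMM11 (hμ : 0 < μ) (hρ : 0 ≤ ρ) (h : ρ ≤ φ) :
    ageMM12Star μ ρ ≤ ageMM11 μ ρ := by
  have hsq := sq_le_self_add_one_of_le_goldenRatio (goldenConj_neg.le.trans hρ) h
  unfold ageMM12Star ageMM11
  gcongr 1 / μ * (1 + 1 / ρ + ?_)
  rw [div_le_div_iff₀ (by positivity) (by positivity)]
  have hdiff : ρ * ((1 + ρ + ρ ^ 2) * (1 + ρ) ^ 2) - ρ ^ 2 * (1 + 3 * ρ + ρ ^ 2) * (1 + ρ)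
      = ρ * (1 + ρ) * (ρ + 1 - ρ ^ 2) := by ring
  linarith [mul_nonneg (mul_nonneg hρ (by positivity : (0 : ℝ) ≤ 1 + ρ)) (sub_nonneg.2 hsq)]

lemma ageMM11_le_ageMM12 (hμ : 0 < μ) (h : φ⁻¹ ≤ ρ) : ageMM11 μ ρ ≤ ageMM12 μ ρ := by
  have hρ : 0 < ρ := (inv_pos.2 goldenRatio_pos).trans_le h
  have hsq := one_le_sq_add_self_of_inv_goldenRatio_le h
  unfold ageMM11 ageMM12
  gcongr 1 / μ * (1 + 1 / ρ + ?_)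
  rw [div_le_div_iff₀ (by positivity) (by positivity)]
  have hdiff : 2 * ρ ^ 2 * (1 + ρ) - ρ * (1 + ρ + ρ ^ 2) = ρ * (ρ ^ 2 + ρ - 1) := by ring
  linarith [mul_nonneg hρ.le (sub_nonneg.2 hsq)]

/-- For offered load `1/φ ≤ ρ ≤ φ` (with `φ` the golden ratio), the M/M/1/2*
age is at most the M/M/1/1 age, which is at most the M/M/1/2 age. -/
theorem mm11_age_between_mid_load (ρ μ : ℝ) (hμ : 0 < μ)
    (hlo : 1 / ((1 + Real.sqrt 5) / 2) ≤ ρ) (hhi : ρ ≤ (1 + Real.sqrt 5) / 2) :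
    (1 / μ) * (1 + 1 / ρ +
        ρ ^ 2 * (1 + 3 * ρ + ρ ^ 2) / ((1 + ρ + ρ ^ 2) * (1 + ρ) ^ 2)) ≤
      (1 / μ) * (1 + 1 / ρ + ρ / (1 + ρ)) ∧
    (1 / μ) * (1 + 1 / ρ + ρ / (1 + ρ)) ≤
      (1 / μ) * (1 + 1 / ρ + 2 * ρ ^ 2 / (1 + ρ + ρ ^ 2)) := by
  rw [one_div] at hlo
  have hρ : 0 < ρ := (inv_pos.2 goldenRatio_pos).trans_le hlo
  exact ⟨ageMM12Star_le_ageMM11 hμ hρ.le hhi, ageMM11_le_ageMM12 hμ hlo⟩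
end

section
/- Let φ = (1+√5)/2 be the golden ratio. For every μ > 0 and every offered load ρ ≥ φ, the M/M/1 packet-management ages satisfy Δ_{M/M/1/1}(ρ) ≤ Δ_{M/M/1/2*}(ρ). -/
/-!
Both ages share the term `1 + 1/ρ`, and the difference of the remaining terms factors as
`ρ (ρ² - ρ - 1) / ((1 + ρ + ρ²)(1 + ρ)²)`. The quadratic `ρ² - ρ - 1 = (ρ - φ)(ρ - ψ)` is
nonnegative for `ρ ≥ φ`, since its other root `ψ` is negative.
-/

open Real

open scoped goldenRatio

theorem sq_sub_self_sub_one_eq_mul_goldenRatio (ρ : ℝ) : ρ ^ 2 - ρ - 1 = (ρ - φ) * (ρ - ψ) := by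
  linear_combination (1 / 4 : ℝ) * sq_sqrt (show (0 : ℝ) ≤ 5 by norm_num)

theorem sq_sub_self_sub_one_nonneg_of_goldenRatio_le {ρ : ℝ} (hρ : φ ≤ ρ) :
    0 ≤ ρ ^ 2 - ρ - 1 := by
  rw [sq_sub_self_sub_one_eq_mul_goldenRatio]
  exact mul_nonneg (sub_nonneg.mpr hρ)
    (sub_nonneg.mpr (goldenConj_neg.le.trans (goldenRatio_pos.le.trans hρ)))

theorem mm12star_term_sub_mm11_term {ρ : ℝ} (hρ : 1 + ρ ≠ 0) :
    ρ ^ 2 * (1 + 3 * ρ + ρ ^ 2) / ((1 + ρ + ρ ^ 2) * (1 + ρ) ^ 2) - ρ / (1 + ρ) =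
      ρ * (ρ ^ 2 - ρ - 1) / ((1 + ρ + ρ ^ 2) * (1 + ρ) ^ 2) := by
  have h : 1 + ρ + ρ ^ 2 ≠ 0 := by nlinarith [sq_nonneg (ρ + 1 / 2)]
  field_simp
  ring

theorem mm11_term_le_mm12star_term {ρ : ℝ} (hρ : φ ≤ ρ) :
    ρ / (1 + ρ) ≤ ρ ^ 2 * (1 + 3 * ρ + ρ ^ 2) / ((1 + ρ + ρ ^ 2) * (1 + ρ) ^ 2) := by
  have hρ_pos : 0 < ρ := goldenRatio_pos.trans_le hρ
  rw [← sub_nonneg, mm12star_term_sub_mm11_term (by positivity)]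
  have := sq_sub_self_sub_one_nonneg_of_goldenRatio_le hρ
  positivity

/-- For offered load `ρ ≥ φ` (with `φ` the golden ratio), the M/M/1/1 age is at
most the M/M/1/2* age. -/
theorem mm11_age_le_mm12star_age_high_load (ρ μ : ℝ) (hμ : 0 < μ)
    (hρφ : (1 + Real.sqrt 5) / 2 ≤ ρ) :
    (1 / μ) * (1 + 1 / ρ + ρ / (1 + ρ)) ≤
      (1 / μ) * (1 + 1 / ρ +
        ρ ^ 2 * (1 + 3 * ρ + ρ ^ 2) / ((1 + ρ + ρ ^ 2) * (1 + ρ) ^ 2)) := by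
  gcongr 1 / μ * (1 + 1 / ρ + ?_)
  exact mm11_term_le_mm12star_term hρφ
end

section
/- The ε-wait average age function g(ε) = (ε² + 2ε + 8)/(4 + 2ε) satisfies g(0) = 2, g(1/2) = 37/20 = 1.85, and g(ε) < g(0) for every ε ∈ (0, 2). In particular, the zero-wait sampling policy (ε = 0) does not minimize the time-average age. -/
theorem epsWait_age_sub_two {ε : ℝ} (hε : 4 + 2 * ε ≠ 0) :
    (ε ^ 2 + 2 * ε + 8) / (4 + 2 * ε) - 2 = ε * (ε - 2) / (4 + 2 * ε) := by
  rw [eq_div_iff hε, sub_mul, div_mul_cancel₀ _ hε]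
  ring

theorem epsWait_age_lt_two {ε : ℝ} (h0 : 0 < ε) (h2 : ε < 2) :
    (ε ^ 2 + 2 * ε + 8) / (4 + 2 * ε) < 2 := by
  have hden : 0 < 4 + 2 * ε := by linarith
  have hneg : ε * (ε - 2) / (4 + 2 * ε) < 0 :=
    div_neg_of_neg_of_pos (mul_neg_of_pos_of_neg h0 (by linarith)) hden
  linarith [epsWait_age_sub_two hden.ne']

/-- The ε-wait average age `g(ε) = (ε² + 2ε + 8)/(4 + 2ε)` satisfies `g(0) = 2`,
`g(1/2) = 37/20 = 1.85`, and `g(ε) < g(0)` for every `ε ∈ (0,2)`: the zero-wait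
sampling policy does not minimize the time-average age. -/
theorem zero_wait_not_optimal :
    ((0 : ℝ) ^ 2 + 2 * 0 + 8) / (4 + 2 * 0) = 2 ∧
    (((1 : ℝ) / 2) ^ 2 + 2 * (1 / 2) + 8) / (4 + 2 * (1 / 2)) = 37 / 20 ∧
    (∀ ε ∈ Set.Ioo (0 : ℝ) 2,
      (ε ^ 2 + 2 * ε + 8) / (4 + 2 * ε)
        < ((0 : ℝ) ^ 2 + 2 * 0 + 8) / (4 + 2 * 0)) := by
  have hzero : ((0 : ℝ) ^ 2 + 2 * 0 + 8) / (4 + 2 * 0) = 2 := by norm_num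
  refine ⟨hzero, by norm_num, fun ε ⟨h0, h2⟩ => ?_⟩
  rw [hzero]
  exact epsWait_age_lt_two h0 h2
end
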